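/- arXiv:1011.1062 — 4 statements merged into one kernel-verified Lean document; each statement's English description precedes it below -/
import Mathlib

section
/- If λ ≥ 0 (defocusing case) then for every nonzero integer ℓ the eigenvalues of G_ℓ are real, and hence all eigenvalues of i·G_ℓ are purely imaginary. -/
/-!
The characteristic polynomial of a real 2 × 2 matrix `!![A, B; C, D]` is, after completing the
square, `(2μ - (A + D))² = (A - D)² + 4BC`. For `G_ℓ` this discriminant is `4ℓ²(ℓ² + 2λ|a|²)`,
which is nonnegative when `λ ≥ 0`, so `2μ - (A + D)` squares to a nonnegative real and is itself
real. Eigenvalues of `i • G_ℓ` are `i` times eigenvalues of `G_ℓ`.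
-/

open Complex

lemma Complex.im_eq_zero_of_sq_eq_ofReal {z : ℂ} {r : ℝ} (hr : 0 ≤ r) (h : z ^ 2 = r) :
    z.im = 0 := by
  have hre : z.re ^ 2 - z.im ^ 2 = r := by simpa [sq] using congrArg Complex.re h
  have him : 2 * z.re * z.im = 0 := by
    have := congrArg Complex.im h
    simp only [sq, mul_im, ofReal_im] at this
    linarith
  rcases mul_eq_zero.mp him with hx | hy
  · have hx : z.re = 0 := by simpa using hx
    nlinarith [sq_nonneg z.im]
  · exact hy

lemma Matrix.im_eq_zero_of_det_fin_two_sub_smul_eq_zero {A B C D : ℝ}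
    (hdisc : 0 ≤ (A - D) ^ 2 + 4 * B * C) {μ : ℂ}
    (h : (!![(A : ℂ), B; C, D] - μ • (1 : Matrix (Fin 2) (Fin 2) ℂ)).det = 0) : μ.im = 0 := by
  simp only [Matrix.det_fin_two, Matrix.sub_apply, Matrix.of_apply, Matrix.cons_val',
    Matrix.cons_val_zero, Matrix.cons_val_one, Matrix.cons_val_fin_one, Matrix.smul_apply,
    Matrix.one_apply_eq, Matrix.one_apply_ne zero_ne_one, Matrix.one_apply_ne one_ne_zero,
    smul_eq_mul, mul_one, mul_zero, sub_zero] at h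
  have hsq : (2 * μ - (A + D)) ^ 2 = (((A - D) ^ 2 + 4 * B * C : ℝ) : ℂ) := by
    push_cast
    linear_combination 4 * h
  have := Complex.im_eq_zero_of_sq_eq_ofReal hdisc hsq
  simpa using this

lemma Matrix.det_smul_sub_smul_one_eq_zero {n K : Type*} [Fintype n] [DecidableEq n] [Field K]
    {c : K} (hc : c ≠ 0) (N : Matrix n n K) {μ : K} (h : (c • N - μ • 1).det = 0) :
    (N - (μ / c) • 1).det = 0 := by
  have hfactor : c • N - μ • (1 : Matrix n n K) = c • (N - (μ / c) • 1) := by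
    rw [smul_sub, smul_smul, mul_div_cancel₀ μ hc]
  rw [hfactor, Matrix.det_smul] at h
  exact (mul_eq_zero.mp h).resolve_left (pow_ne_zero _ hc)

theorem stmt_5_general (a : ℂ) (k lam : ℝ) (hlam : 0 ≤ lam) (l : ℤ) :
    (∀ μ : ℂ,
      Matrix.det
        (!![((-(l : ℝ) ^ 2 - 2 * k * (l : ℝ) - lam * ‖a‖ ^ 2 : ℝ) : ℂ),
              ((-(lam * ‖a‖ ^ 2) : ℝ) : ℂ);
            ((lam * ‖a‖ ^ 2 : ℝ) : ℂ),
              (((l : ℝ) ^ 2 - 2 * k * (l : ℝ) + lam * ‖a‖ ^ 2 : ℝ) : ℂ)]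
          - μ • (1 : Matrix (Fin 2) (Fin 2) ℂ)) = 0 → μ.im = 0)
    ∧ (∀ μ : ℂ,
      Matrix.det
        (Complex.I •
            !![((-(l : ℝ) ^ 2 - 2 * k * (l : ℝ) - lam * ‖a‖ ^ 2 : ℝ) : ℂ),
                ((-(lam * ‖a‖ ^ 2) : ℝ) : ℂ);
              ((lam * ‖a‖ ^ 2 : ℝ) : ℂ),
                (((l : ℝ) ^ 2 - 2 * k * (l : ℝ) + lam * ‖a‖ ^ 2 : ℝ) : ℂ)]
          - μ • (1 : Matrix (Fin 2) (Fin 2) ℂ)) = 0 → μ.re = 0) := by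
  have hdisc : 0 ≤ ((-(l : ℝ) ^ 2 - 2 * k * l - lam * ‖a‖ ^ 2)
      - ((l : ℝ) ^ 2 - 2 * k * l + lam * ‖a‖ ^ 2)) ^ 2
      + 4 * (-(lam * ‖a‖ ^ 2)) * (lam * ‖a‖ ^ 2) := by
    have : 0 ≤ 4 * (l : ℝ) ^ 2 * ((l : ℝ) ^ 2 + 2 * (lam * ‖a‖ ^ 2)) := by positivity
    linarith
  have hreal := fun μ => Matrix.im_eq_zero_of_det_fin_two_sub_smul_eq_zero hdisc (μ := μ)
  refine ⟨hreal, fun μ h => ?_⟩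
  have := hreal _ (Matrix.det_smul_sub_smul_one_eq_zero I_ne_zero _ h)
  simpa [div_I] using this

/-- In the defocusing case `λ ≥ 0`, for every nonzero integer `ℓ` the eigenvalues of
`G_ℓ` are real, and hence all eigenvalues of `i·G_ℓ` are purely imaginary. -/
theorem stmt_5 (a : ℂ) (k lam : ℝ) (hlam : 0 ≤ lam) (l : ℤ) (hl : l ≠ 0) :
    (∀ μ : ℂ,
      Matrix.det
        (!![((-(l : ℝ) ^ 2 - 2 * k * (l : ℝ) - lam * ‖a‖ ^ 2 : ℝ) : ℂ),
              ((-(lam * ‖a‖ ^ 2) : ℝ) : ℂ);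
            ((lam * ‖a‖ ^ 2 : ℝ) : ℂ),
              (((l : ℝ) ^ 2 - 2 * k * (l : ℝ) + lam * ‖a‖ ^ 2 : ℝ) : ℂ)]
          - μ • (1 : Matrix (Fin 2) (Fin 2) ℂ)) = 0 → μ.im = 0)
    ∧ (∀ μ : ℂ,
      Matrix.det
        (Complex.I •
            !![((-(l : ℝ) ^ 2 - 2 * k * (l : ℝ) - lam * ‖a‖ ^ 2 : ℝ) : ℂ),
                ((-(lam * ‖a‖ ^ 2) : ℝ) : ℂ);
              ((lam * ‖a‖ ^ 2 : ℝ) : ℂ),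
                (((l : ℝ) ^ 2 - 2 * k * (l : ℝ) + lam * ‖a‖ ^ 2 : ℝ) : ℂ)]
          - μ • (1 : Matrix (Fin 2) (Fin 2) ℂ)) = 0 → μ.re = 0) :=
  stmt_5_general a k lam hlam l
end

section
/- The continuous plane wave V^n(x) = a·exp(i(kx − ωnτ)) satisfies the Besse scheme (with φ^{n+1/2} = |a|², obtained from (φ^{n+1/2} + φ^{n−1/2})/2 = |V^n|² with initial value |a|²): (i/τ)(V^{n+1} − V^n) + (V^{n+1}_{xx} + V^n_{xx})/2 = λ·φ^{n+1/2}·(V^{n+1} + V^n)/2, if and only if tan(ωτ/2) = (1/2)(λτ|a|² + τk²). -/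
/-!
Every term of the scheme is a multiple of `V^n(x)`: the second `x`-derivative acts as
multiplication by `-k²`, and one time step multiplies by `w²` with `w = exp(-iωτ/2)`.
Factoring out `w` turns `w² - 1` and `w² + 1` into `-2i sin(ωτ/2)` and `2 cos(ωτ/2)`, so the
scheme holds iff the real number `(2/τ) sin(ωτ/2) - (k² + λ|a|²) cos(ωτ/2)` vanishes.
-/

open Complex

lemma hasDerivAt_const_mul_cexp_mul (c b : ℂ) (x : ℝ) :
    HasDerivAt (fun y : ℝ => c * cexp (b * y)) (b * c * cexp (b * x)) x := by
  have := (((hasDerivAt_id (x : ℂ)).const_mul b).cexp.const_mul c).comp_ofReal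
  simpa [mul_comm, mul_left_comm, mul_assoc] using this

lemma iteratedDeriv_const_mul_cexp_mul (n : ℕ) (c b : ℂ) :
    iteratedDeriv n (fun y : ℝ => c * cexp (b * y)) =
      fun y : ℝ => b ^ n * c * cexp (b * y) := by
  induction n generalizing c with
  | zero => simp
  | succ n ih =>
    rw [iteratedDeriv_succ', funext fun x => (hasDerivAt_const_mul_cexp_mul c b x).deriv, ih]
    ext y
    ring

lemma cexp_neg_mul_I_sq_sub_one (z : ℂ) :
    cexp (-z * I) ^ 2 - 1 = cexp (-z * I) * (-2 * sin z * I) := by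
  rw [← cos_sub_sin_I]
  linear_combination sin_sq_add_cos_sq z - sin z ^ 2 * I_sq

lemma cexp_neg_mul_I_sq_add_one (z : ℂ) :
    cexp (-z * I) ^ 2 + 1 = cexp (-z * I) * (2 * cos z) := by
  rw [← cos_sub_sin_I]
  linear_combination -sin_sq_add_cos_sq z + sin z ^ 2 * I_sq

noncomputable def planeWave (a : ℂ) (k ω τ : ℝ) (n : ℤ) (x : ℝ) : ℂ :=
  a * cexp (I * ((k * x - ω * n * τ : ℝ) : ℂ))

section planeWave

variable (a : ℂ) (k ω τ : ℝ) (n : ℤ) (x : ℝ)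

lemma planeWave_ne_zero (ha : a ≠ 0) : planeWave a k ω τ n x ≠ 0 :=
  mul_ne_zero ha (exp_ne_zero _)

lemma iteratedDeriv_two_planeWave :
    iteratedDeriv 2 (planeWave a k ω τ n) x = -k ^ 2 * planeWave a k ω τ n x := by
  have h : planeWave a k ω τ n = fun y : ℝ => a * cexp (-(ω * n * τ) * I) * cexp (k * I * y) := by
    ext y
    rw [planeWave, mul_assoc a (cexp _), ← exp_add]
    congr 2
    push_cast
    ring
  rw [h, iteratedDeriv_const_mul_cexp_mul, mul_pow, I_sq]
  ring

lemma planeWave_succ :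
    planeWave a k ω τ (n + 1) x = cexp (-(ω * τ / 2 : ℝ) * I) ^ 2 * planeWave a k ω τ n x := by
  rw [planeWave, planeWave, mul_left_comm, ← exp_nat_mul, ← exp_add]
  congr 2
  push_cast
  ring

lemma besse_residual_planeWave (μ : ℝ) :
    (I / τ) * (planeWave a k ω τ (n + 1) x - planeWave a k ω τ n x)
        + (iteratedDeriv 2 (planeWave a k ω τ (n + 1)) x
          + iteratedDeriv 2 (planeWave a k ω τ n) x) / 2
        - μ * ((planeWave a k ω τ (n + 1) x + planeWave a k ω τ n x) / 2)
      = planeWave a k ω τ n x * cexp (-(ω * τ / 2 : ℝ) * I)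
          * ((2 / τ * Real.sin (ω * τ / 2) - (k ^ 2 + μ) * Real.cos (ω * τ / 2) : ℝ) : ℂ) := by
  rw [iteratedDeriv_two_planeWave, iteratedDeriv_two_planeWave, planeWave_succ]
  have hsub := cexp_neg_mul_I_sq_sub_one (ω * τ / 2 : ℝ)
  have hadd := cexp_neg_mul_I_sq_add_one (ω * τ / 2 : ℝ)
  push_cast at hsub hadd ⊢
  linear_combination (planeWave a k ω τ n x) * ((I / τ) * hsub - (k ^ 2 + μ) / 2 * hadd)
    - 2 * planeWave a k ω τ n x * cexp (-(ω * τ / 2) * I) * sin (ω * τ / 2) / τ * I_sq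

lemma besse_planeWave_iff (ha : a ≠ 0) (μ : ℝ) :
    (I / τ) * (planeWave a k ω τ (n + 1) x - planeWave a k ω τ n x)
        + (iteratedDeriv 2 (planeWave a k ω τ (n + 1)) x
          + iteratedDeriv 2 (planeWave a k ω τ n) x) / 2
        = μ * ((planeWave a k ω τ (n + 1) x + planeWave a k ω τ n x) / 2)
      ↔ 2 / τ * Real.sin (ω * τ / 2) - (k ^ 2 + μ) * Real.cos (ω * τ / 2) = 0 := by
  rw [← sub_eq_zero, besse_residual_planeWave, mul_eq_zero,
    or_iff_right (mul_ne_zero (planeWave_ne_zero a k ω τ n x ha) (exp_ne_zero _)), ofReal_eq_zero]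

end planeWave

lemma tan_eq_mul_iff {θ τ g : ℝ} (hτ : τ ≠ 0) (hcos : Real.cos θ ≠ 0) :
    Real.tan θ = τ / 2 * g ↔ 2 / τ * Real.sin θ - g * Real.cos θ = 0 := by
  rw [Real.tan_eq_sin_div_cos, div_eq_iff hcos]
  constructor <;> intro h
  · field_simp
    linear_combination 2 * h
  · field_simp at h
    linear_combination h / 2

/-- The continuous plane wave `V^n(x) = a·exp(i(kx − ωnτ))` (with `φ^{n+1/2} = |a|²`)
satisfies the Besse scheme if and only if `tan(ωτ/2) = (1/2)(λτ|a|² + τk²)`. -/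
theorem stmt_7 (a : ℂ) (ha : a ≠ 0) (k ω lam τ : ℝ) (hτ : 0 < τ)
    (hcos : Real.cos (ω * τ / 2) ≠ 0) (V : ℤ → ℝ → ℂ)
    (hV : ∀ (n : ℤ) (x : ℝ), V n x = a * Complex.exp (Complex.I * ((k * x - ω * (n : ℝ) * τ : ℝ) : ℂ))) :
    (∀ (n : ℤ) (x : ℝ),
      (Complex.I / (τ : ℂ)) * (V (n + 1) x - V n x)
        + (iteratedDeriv 2 (V (n + 1)) x + iteratedDeriv 2 (V n) x) / 2
      = (lam : ℂ) * ((‖a‖ ^ 2 : ℝ) : ℂ) * ((V (n + 1) x + V n x) / 2))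
    ↔ Real.tan (ω * τ / 2) = (1 / 2) * (lam * τ * ‖a‖ ^ 2 + τ * k ^ 2) := by
  obtain rfl : V = planeWave a k ω τ := funext fun n => funext (hV n)
  simp only [← ofReal_mul, besse_planeWave_iff a k ω τ _ _ ha, forall_const]
  rw [show 1 / 2 * (lam * τ * ‖a‖ ^ 2 + τ * k ^ 2) = τ / 2 * (k ^ 2 + lam * ‖a‖ ^ 2) by ring,
    tan_eq_mul_iff hτ.ne' hcos]
end

section
/- In the limit h → 0 and k = 0, for λ|a|² > 1/2 and ℓ = 1, the root of largest modulus of the Fei stability polynomial satisfies z* = −(1 + τ·ℓ·√(2λ|a|² − ℓ²)) + O(τ²) as τ → 0; in particular |z*| = 1 + τ√(2λ|a|² − 1) + O(τ²) > 1 for small τ. -/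
/-!
Write `μ = λ|a|²`, `q = μτ` and `K = cos ωτ`. Since `tan ωτ = q`, `e^{-iωτ} = K(1 - iq)`, so
`c = K(-τ + iP)` with `P = 1 + (τ + q)q`, and with `A = τ² + P²` the polynomial is palindromic:
`p(z) = K²(A z⁴ + 4qτ z³ + 2(τ² - P²) z² + 4qτ z + A) = K²A (z² - s₁z + 1)(z² - s₂z + 1)`,
where `A s₁,₂ = -2qτ ∓ 2R` and `R² = q²τ² + AP²`. Since `|s₂| ≤ 2`, the roots of the second factor
lie on the unit circle. The first factor has the real roots `z*` and `1/z*`, with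
`z* = -(qτ + R + τ√g)/A` where `τ²g = (qτ + R)² - A²`; the identity
`R² - (A - qτ)² = Aτ²(2μ - 1)` gives `|z*| > 1` as `2μ > 1`. Finally `A`, `R` are
`1 + O(τ²)` and `g = 2μ - 1 + O(τ²)`, so `z* = -(1 + τ√(2μ - 1)) + O(τ²)`.
-/

open Complex ComplexConjugate

/-- `c = e^{−iωτ}(i − ℓ²τ − q)` with `ℓ = 1`, `q = λτ|a|²` and `ω` given by the
dispersion relation `tan(ωτ) = q` (so `ωτ = arctan q`), for the Fei scheme with
`k = 0` in the limit `h → 0`. -/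
noncomputable def fei12C (lam : ℝ) (a : ℂ) (τ : ℝ) : ℂ :=
  Complex.exp (-Complex.I * ((Real.arctan (lam * τ * (‖a‖) ^ 2) : ℝ) : ℂ)) *
    (Complex.I - ((1 ^ 2 * τ + lam * τ * (‖a‖) ^ 2 : ℝ) : ℂ))

/-- The Fei stability polynomial for `k = 0`, `h → 0`, `ℓ = 1`:
`p(z) = |c|²z⁴ − b(c + conj c)z³ + (c² + conj(c)²)z² − b(c + conj c)z + |c|²`,
with `b = 2q·cos(ωτ)`. -/
noncomputable def fei12P (lam : ℝ) (a : ℂ) (τ : ℝ) (z : ℂ) : ℂ :=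
  fei12C lam a τ * conj (fei12C lam a τ) * z ^ 4
    - ((2 * (lam * τ * (‖a‖) ^ 2) *
          Real.cos (Real.arctan (lam * τ * (‖a‖) ^ 2)) : ℝ) : ℂ) *
        (fei12C lam a τ + conj (fei12C lam a τ)) * z ^ 3
    + (fei12C lam a τ ^ 2 + conj (fei12C lam a τ) ^ 2) * z ^ 2
    - ((2 * (lam * τ * (‖a‖) ^ 2) *
          Real.cos (Real.arctan (lam * τ * (‖a‖) ^ 2)) : ℝ) : ℂ) *
        (fei12C lam a τ + conj (fei12C lam a τ)) * z
    + fei12C lam a τ * conj (fei12C lam a τ)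

open Filter Topology Asymptotics

theorem abs_sqrt_sub_sqrt_le (x : ℝ) {c : ℝ} (hc : 0 < c) : |√x - √c| ≤ |x - c| / √c := by
  have hc' : 0 < √c := Real.sqrt_pos.mpr hc
  rw [le_div_iff₀ hc']
  rcases le_total x 0 with hx | hx
  · rw [Real.sqrt_eq_zero'.mpr hx, zero_sub, abs_neg, abs_of_pos hc', ← sq,
      Real.sq_sqrt hc.le, abs_of_nonpos (by linarith)]
    linarith
  · have hsum : 0 ≤ √x + √c := by positivity
    calc |√x - √c| * √c ≤ |√x - √c| * (√x + √c) := by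
          gcongr; linarith [Real.sqrt_nonneg x]
      _ = |x - c| := by
        rw [← abs_of_nonneg hsum, ← abs_mul, mul_comm, ← sq_sub_sq, Real.sq_sqrt hx,
          Real.sq_sqrt hc.le]

namespace Asymptotics

variable {α : Type*} {l : Filter α} {f h u : α → ℝ}

theorem IsBigO.sqrt_sub_sqrt {c : ℝ} (hc : 0 < c) (hf : (fun x => f x - c) =O[l] u) :
    (fun x => √(f x) - √c) =O[l] u := by
  refine (IsBigO.of_bound (1 / √c) (Eventually.of_forall fun x => ?_)).trans hf
  simpa only [Real.norm_eq_abs, one_div_mul_eq_div] using abs_sqrt_sub_sqrt_le (f x) hc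

theorem IsBigO.mul_tendsto {c : ℝ} (hf : f =O[l] u) (hh : Tendsto h l (𝓝 c)) :
    (fun x => f x * h x) =O[l] u := by
  simpa using hf.mul (hh.isBigO_one ℝ)

end Asymptotics

theorem norm_le_of_reciprocal_quadratic_root {s z₁ z : ℂ} (h₁ : z₁ ^ 2 - s * z₁ + 1 = 0)
    (hz₁ : 1 ≤ ‖z₁‖) (hz : z ^ 2 - s * z + 1 = 0) : ‖z‖ ≤ ‖z₁‖ := by
  have hz₁0 : z₁ ≠ 0 := norm_pos_iff.mp (by linarith)
  have hs : s = z₁ + z₁⁻¹ := by field_simp; linear_combination -h₁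
  have hfac : (z - z₁) * (z - z₁⁻¹) = 0 := by
    rw [← hz, hs]; field_simp; ring
  rcases mul_eq_zero.mp hfac with h | h
  · rw [sub_eq_zero.mp h]
  · rw [sub_eq_zero.mp h, norm_inv]
    exact (inv_le_one_of_one_le₀ hz₁).trans hz₁

theorem norm_le_one_of_reciprocal_quadratic_root {s : ℝ} (hs : |s| ≤ 2) {z : ℂ}
    (hz : z ^ 2 - s * z + 1 = 0) : ‖z‖ ≤ 1 := by
  set y := √(1 - (s / 2) ^ 2)
  have hy : y ^ 2 = 1 - (s / 2) ^ 2 := Real.sq_sqrt (by nlinarith [abs_le.mp hs])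
  have hζ : ‖((s / 2 : ℝ) : ℂ) + y * Complex.I‖ = 1 := by
    rw [Complex.norm_add_mul_I, hy, add_sub_cancel, Real.sqrt_one]
  have hroot : (((s / 2 : ℝ) : ℂ) + y * Complex.I) ^ 2
      - s * (((s / 2 : ℝ) : ℂ) + y * Complex.I) + 1 = 0 := by
    have hy' : (y : ℂ) ^ 2 = 1 - ((s : ℂ) / 2) ^ 2 := by exact_mod_cast hy
    push_cast
    linear_combination (y : ℂ) ^ 2 * Complex.I_sq - hy'
  exact hζ ▸ norm_le_of_reciprocal_quadratic_root hroot hζ.ge hz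

theorem exp_neg_I_mul_arctan (q : ℝ) :
    Complex.exp (-Complex.I * (Real.arctan q : ℂ)) =
      Real.cos (Real.arctan q) * (1 - q * Complex.I) := by
  have hsin : Real.sin (Real.arctan q) = q * Real.cos (Real.arctan q) := by
    rw [Real.sin_arctan, Real.cos_arctan]; ring
  rw [show -Complex.I * (Real.arctan q : ℂ) = ((-Real.arctan q : ℝ) : ℂ) * Complex.I by
    push_cast; ring, Complex.exp_mul_I, ← Complex.ofReal_cos, ← Complex.ofReal_sin,
    Real.cos_neg, Real.sin_neg, hsin]
  push_cast; ring

noncomputable section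

namespace Fei12

variable (μ τ : ℝ)

def P : ℝ := 1 + (τ + μ * τ) * (μ * τ)

def A : ℝ := τ ^ 2 + P μ τ ^ 2

def R : ℝ := √((μ * τ ^ 2) ^ 2 + A μ τ * P μ τ ^ 2)

def g : ℝ := 2 * μ ^ 2 * τ ^ 2 + 2 * μ * R μ τ - A μ τ

def s₁ : ℝ := -2 * (μ * τ ^ 2 + R μ τ) / A μ τ

def s₂ : ℝ := 2 * (R μ τ - μ * τ ^ 2) / A μ τ

def dominantRoot : ℝ := -(μ * τ ^ 2 + R μ τ + τ * √(g μ τ)) / A μ τ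

theorem A_pos : 0 < A μ τ := by
  rcases eq_or_ne τ 0 with rfl | hτ
  · simp [A, P]
  · unfold A; positivity

theorem R_sq : R μ τ ^ 2 = (μ * τ ^ 2) ^ 2 + A μ τ * P μ τ ^ 2 :=
  Real.sq_sqrt (by have := A_pos μ τ; positivity)

theorem abs_s₂_le_two (hμ : 0 ≤ μ) : |s₂ μ τ| ≤ 2 := by
  have hA := A_pos μ τ
  have hμτ : 0 ≤ μ * τ ^ 2 := by positivity
  have hlow : μ * τ ^ 2 ≤ R μ τ :=
    (le_abs_self _).trans (Real.abs_le_sqrt (le_add_of_nonneg_right (by positivity)))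
  have hup : R μ τ ≤ A μ τ + μ * τ ^ 2 := by
    refine Real.sqrt_le_iff.mpr ⟨by positivity, ?_⟩
    have : A μ τ * P μ τ ^ 2 ≤ A μ τ * A μ τ :=
      mul_le_mul_of_nonneg_left (le_add_of_nonneg_left (sq_nonneg τ)) hA.le
    nlinarith [mul_nonneg hA.le hμτ]
  have : |R μ τ - μ * τ ^ 2| ≤ A μ τ := abs_le.mpr ⟨by linarith, by linarith⟩
  rw [s₂, abs_div, abs_of_pos hA, div_le_iff₀ hA, abs_mul, abs_two]
  linarith

theorem A_sub_le_R (hμ : 1 / 2 ≤ μ) : A μ τ - μ * τ ^ 2 ≤ R μ τ := by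
  have hkey : (μ * τ ^ 2) ^ 2 + A μ τ * P μ τ ^ 2 - (A μ τ - μ * τ ^ 2) ^ 2 =
      A μ τ * τ ^ 2 * (2 * μ - 1) := by
    unfold A; ring
  have : 0 ≤ A μ τ * τ ^ 2 * (2 * μ - 1) :=
    mul_nonneg (mul_nonneg (A_pos μ τ).le (sq_nonneg τ)) (by linarith)
  exact (le_abs_self _).trans (Real.abs_le_sqrt (by linarith))

theorem g_pos (hμ : 1 / 2 < μ) : 0 < g μ τ := by
  have hR := A_sub_le_R μ τ hμ.le
  have hA := A_pos μ τ
  unfold g; nlinarith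

theorem one_lt_norm_dominantRoot (hμ : 1 / 2 < μ) (hτ : 0 < τ) :
    1 < ‖(dominantRoot μ τ : ℂ)‖ := by
  have hR := A_sub_le_R μ τ hμ.le
  have hA := A_pos μ τ
  have hD : 0 < τ * √(g μ τ) := mul_pos hτ (Real.sqrt_pos.mpr (g_pos μ τ hμ))
  rw [Complex.norm_real, Real.norm_eq_abs, dominantRoot, neg_div, abs_neg,
    abs_of_pos (div_pos (by linarith) hA), one_lt_div hA]
  linarith

theorem dominantRoot_isRoot (hμ : 1 / 2 < μ) :
    dominantRoot μ τ ^ 2 - s₁ μ τ * dominantRoot μ τ + 1 = 0 := by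
  have hA := (A_pos μ τ).ne'
  have hAdef : A μ τ = τ ^ 2 + P μ τ ^ 2 := rfl
  have hD : (τ * √(g μ τ)) ^ 2 = (μ * τ ^ 2 + R μ τ) ^ 2 - A μ τ ^ 2 := by
    rw [mul_pow, Real.sq_sqrt (g_pos μ τ hμ).le, g]
    linear_combination -R_sq μ τ + A μ τ * hAdef
  rw [dominantRoot, s₁]
  field_simp
  linear_combination hD

theorem fei12C_eq (lam : ℝ) (a : ℂ) :
    fei12C lam a τ = Real.cos (Real.arctan (lam * τ * ‖a‖ ^ 2)) *
      (-τ + P (lam * ‖a‖ ^ 2) τ * Complex.I) := by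
  rw [fei12C, exp_neg_I_mul_arctan, P]
  generalize Real.cos (Real.arctan (lam * τ * ‖a‖ ^ 2)) = K
  push_cast
  linear_combination (-(lam * τ * ‖a‖ ^ 2 * K : ℂ)) * Complex.I_sq

theorem fei12P_eq (lam : ℝ) (a : ℂ) (z : ℂ) :
    fei12P lam a τ z = (Real.cos (Real.arctan (lam * τ * ‖a‖ ^ 2)) : ℂ) ^ 2 *
      (A (lam * ‖a‖ ^ 2) τ * z ^ 4 + 4 * ((lam * ‖a‖ ^ 2 : ℝ) : ℂ) * τ ^ 2 * z ^ 3
        + 2 * (τ ^ 2 - P (lam * ‖a‖ ^ 2) τ ^ 2) * z ^ 2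
        + 4 * ((lam * ‖a‖ ^ 2 : ℝ) : ℂ) * τ ^ 2 * z + A (lam * ‖a‖ ^ 2) τ) := by
  rw [fei12P, fei12C_eq, A]
  generalize Real.cos (Real.arctan (lam * τ * ‖a‖ ^ 2)) = K
  generalize P (lam * ‖a‖ ^ 2) τ = p
  simp only [map_mul, map_add, map_neg, Complex.conj_ofReal, Complex.conj_I]
  push_cast
  linear_combination (K : ℂ) ^ 2 * (- p ^ 2 * z ^ 4 + 2 * p ^ 2 * z ^ 2 - p ^ 2) * Complex.I_sq

theorem palindromic_quartic_eq_mul (z : ℂ) :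
    A μ τ * z ^ 4 + 4 * μ * τ ^ 2 * z ^ 3 + 2 * (τ ^ 2 - P μ τ ^ 2) * z ^ 2
        + 4 * μ * τ ^ 2 * z + A μ τ =
      A μ τ * ((z ^ 2 - s₁ μ τ * z + 1) * (z ^ 2 - s₂ μ τ * z + 1)) := by
  have hA : (A μ τ : ℂ) ≠ 0 := by exact_mod_cast (A_pos μ τ).ne'
  have hR : (R μ τ : ℂ) ^ 2 = (μ * τ ^ 2) ^ 2 + A μ τ * P μ τ ^ 2 := by
    exact_mod_cast R_sq μ τ
  have hAdef : (A μ τ : ℂ) = τ ^ 2 + P μ τ ^ 2 := by simp [A]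
  simp only [s₁, s₂]
  push_cast
  field_simp
  linear_combination (4 * z ^ 2) * hR - (2 * A μ τ * z ^ 2) * hAdef

theorem fei12P_eq_zero_iff (lam : ℝ) (a : ℂ) (z : ℂ) :
    fei12P lam a τ z = 0 ↔ z ^ 2 - s₁ (lam * ‖a‖ ^ 2) τ * z + 1 = 0 ∨
      z ^ 2 - s₂ (lam * ‖a‖ ^ 2) τ * z + 1 = 0 := by
  have hK : (Real.cos (Real.arctan (lam * τ * ‖a‖ ^ 2)) : ℂ) ≠ 0 :=
    Complex.ofReal_ne_zero.mpr (Real.cos_arctan_pos _).ne'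
  have hA : (A (lam * ‖a‖ ^ 2) τ : ℂ) ≠ 0 := Complex.ofReal_ne_zero.mpr (A_pos _ _).ne'
  rw [fei12P_eq, palindromic_quartic_eq_mul, mul_eq_zero, mul_eq_zero, mul_eq_zero]
  simp only [pow_eq_zero_iff two_ne_zero, hK, hA, false_or]

theorem continuous_P : Continuous (P μ) := by
  unfold P; fun_prop

theorem continuous_A : Continuous (A μ) := by
  have := continuous_P μ
  unfold A; fun_prop

theorem A_sub_one_isBigO : (fun τ => A μ τ - 1) =O[𝓝 0] (· ^ 2) := by
  have h : (fun τ => A μ τ - 1) =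
      fun τ => τ ^ 2 * (1 + 2 * (μ * (1 + μ)) + (μ * (1 + μ)) ^ 2 * τ ^ 2) := by
    funext τ; unfold A P; ring
  rw [h]
  exact (isBigO_refl _ _).mul_tendsto ((by fun_prop : Continuous fun τ : ℝ =>
    1 + 2 * (μ * (1 + μ)) + (μ * (1 + μ)) ^ 2 * τ ^ 2).tendsto 0)

theorem R_sub_one_isBigO : (fun τ => R μ τ - 1) =O[𝓝 0] (· ^ 2) := by
  have h : (fun τ => (μ * τ ^ 2) ^ 2 + A μ τ * P μ τ ^ 2 - 1) = fun τ =>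
      τ ^ 2 * (μ ^ 2 * τ ^ 2 + P μ τ ^ 2 + μ * (1 + μ) * (P μ τ + 1) * (P μ τ ^ 2 + 1)) := by
    funext τ; unfold A P; ring
  have hP := continuous_P μ
  have hsq : (fun τ => (μ * τ ^ 2) ^ 2 + A μ τ * P μ τ ^ 2 - 1) =O[𝓝 0] (· ^ 2) := by
    rw [h]
    exact (isBigO_refl _ _).mul_tendsto ((by fun_prop : Continuous fun τ : ℝ =>
      μ ^ 2 * τ ^ 2 + P μ τ ^ 2 + μ * (1 + μ) * (P μ τ + 1) * (P μ τ ^ 2 + 1)).tendsto 0)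
  simpa only [R, Real.sqrt_one] using hsq.sqrt_sub_sqrt one_pos

theorem sqrt_g_sub_isBigO (hμ : 1 / 2 < μ) :
    (fun τ => √(g μ τ) - √(2 * μ - 1)) =O[𝓝 0] (· ^ 2) := by
  have h : (fun τ => g μ τ - (2 * μ - 1)) =
      fun τ => 2 * μ ^ 2 * τ ^ 2 + 2 * μ * (R μ τ - 1) - (A μ τ - 1) := by
    funext τ; unfold g; ring
  refine IsBigO.sqrt_sub_sqrt (by linarith) ?_
  rw [h]
  exact (((isBigO_refl _ _).const_mul_left _).add ((R_sub_one_isBigO μ).const_mul_left _)).sub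
    (A_sub_one_isBigO μ)

theorem dominantRoot_add_isBigO (hμ : 1 / 2 < μ) :
    (fun τ => dominantRoot μ τ + (1 + τ * √(2 * μ - 1))) =O[𝓝 0] (· ^ 2) := by
  have h : (fun τ => dominantRoot μ τ + (1 + τ * √(2 * μ - 1))) = fun τ =>
      ((A μ τ - 1) * (1 + τ * √(2 * μ - 1)) - μ * τ ^ 2 - (R μ τ - 1)
        - (√(g μ τ) - √(2 * μ - 1)) * τ) * (A μ τ)⁻¹ := by
    funext τ
    have := (A_pos μ τ).ne'
    rw [dominantRoot]; field_simp; ring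
  have hA : Tendsto (fun τ => (A μ τ)⁻¹) (𝓝 0) (𝓝 (A μ 0)⁻¹) :=
    ((continuous_A μ).tendsto 0).inv₀ (A_pos μ 0).ne'
  have hlin := (by fun_prop : Continuous fun τ : ℝ => 1 + τ * √(2 * μ - 1)).tendsto 0
  rw [h]
  exact ((((A_sub_one_isBigO μ).mul_tendsto hlin).sub (isBigO_const_mul_self _ _ _)).sub
    (R_sub_one_isBigO μ) |>.sub ((sqrt_g_sub_isBigO μ hμ).mul_tendsto tendsto_id)).mul_tendsto hA

theorem fei12P_dominantRoot (lam : ℝ) (a : ℂ) (hlam : 1 / 2 < lam * ‖a‖ ^ 2) :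
    fei12P lam a τ (dominantRoot (lam * ‖a‖ ^ 2) τ) = 0 :=
  (fei12P_eq_zero_iff τ lam a _).mpr <| Or.inl <| by
    exact_mod_cast dominantRoot_isRoot _ τ hlam

theorem norm_le_norm_dominantRoot (lam : ℝ) (a : ℂ) (hlam : 1 / 2 < lam * ‖a‖ ^ 2) (hτ : 0 < τ)
    {w : ℂ} (hw : fei12P lam a τ w = 0) : ‖w‖ ≤ ‖(dominantRoot (lam * ‖a‖ ^ 2) τ : ℂ)‖ := by
  have hnorm := one_lt_norm_dominantRoot _ τ hlam hτ
  rcases (fei12P_eq_zero_iff τ lam a w).mp hw with h | h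
  · exact norm_le_of_reciprocal_quadratic_root (by exact_mod_cast dominantRoot_isRoot _ τ hlam)
      hnorm.le h
  · exact (norm_le_one_of_reciprocal_quadratic_root (abs_s₂_le_two _ τ (by linarith)) h).trans
      hnorm.le

end Fei12

end

open Fei12

theorem stmt_12_general (a : ℂ) (lam : ℝ)
    (hlam : 1 / 2 < lam * (‖a‖) ^ 2) :
    ∃ C > (0 : ℝ), ∃ τ₀ > (0 : ℝ), ∀ τ : ℝ, 0 < τ → τ < τ₀ →
      ∃ z : ℂ, fei12P lam a τ z = 0
        ∧ (∀ w : ℂ, fei12P lam a τ w = 0 → ‖w‖ ≤ ‖z‖)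
        ∧ ‖z - ((-(1 + τ * Real.sqrt (2 * lam * (‖a‖) ^ 2 - 1)) : ℝ) : ℂ)‖
            ≤ C * τ ^ 2
        ∧ 1 < ‖z‖ := by
  obtain ⟨C, hC, hbound⟩ := (dominantRoot_add_isBigO _ hlam).exists_pos
  obtain ⟨τ₀, hτ₀, hτ₀bound⟩ := Metric.eventually_nhds_iff.mp hbound.bound
  refine ⟨C, hC, τ₀, hτ₀, fun τ hτ hττ₀ => ⟨dominantRoot (lam * ‖a‖ ^ 2) τ,
    fei12P_dominantRoot τ lam a hlam, fun w hw => norm_le_norm_dominantRoot τ lam a hlam hτ hw,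
    ?_, one_lt_norm_dominantRoot _ τ hlam hτ⟩⟩
  have hclose := hτ₀bound (show dist τ 0 < τ₀ by rwa [Real.dist_0_eq_abs, abs_of_pos hτ])
  rw [← Complex.ofReal_sub, Complex.norm_real, sub_neg_eq_add, mul_assoc 2 lam]
  rwa [norm_pow, Real.norm_eq_abs τ, sq_abs] at hclose

/-- For `k = 0`, `h → 0`, `λ|a|² > 1/2` and `ℓ = 1`, the maximal-modulus root of the
Fei stability polynomial satisfies `z* = −(1 + τ√(2λ|a|² − 1)) + O(τ²)` as `τ → 0`;
in particular `|z*| > 1` for small `τ`. -/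
theorem stmt_12 (a : ℂ) (ha : a ≠ 0) (lam : ℝ)
    (hlam : 1 / 2 < lam * (‖a‖) ^ 2) :
    ∃ C > (0 : ℝ), ∃ τ₀ > (0 : ℝ), ∀ τ : ℝ, 0 < τ → τ < τ₀ →
      ∃ z : ℂ, fei12P lam a τ z = 0
        ∧ (∀ w : ℂ, fei12P lam a τ w = 0 → ‖w‖ ≤ ‖z‖)
        ∧ ‖z - ((-(1 + τ * Real.sqrt (2 * lam * (‖a‖) ^ 2 - 1)) : ℝ) : ℂ)‖
            ≤ C * τ ^ 2
        ∧ 1 < ‖z‖ :=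
  stmt_12_general a lam hlam
end

section
/- Let p(z) = z³ + conj(g)z² + gz + f with |f| = 1. If |g| ≤ 1 then all roots of p lie on the unit circle; if |g| > 3 then p has a root off the unit circle. (Sufficiency of |g| ≤ 1 and necessity of |g| ≤ 3 for the stability of the self-reciprocal cubic.) -/
/-!
If `|a| ≤ 1` and `z` is a root off the unit circle, then self-reciprocity makes `w = 1 / conj z`
a second, different root. Since `z w t = -c` for the third root `t`, and `|z w| = 1 = |c|`, we get
`|t| = 1`, so `|z + w| = |a + t| ≤ 2`; but `|z + 1 / conj z| = |z| + 1 / |z| > 2`.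
If instead all three roots are on the unit circle, their sum `-a` has modulus at most `3`.
-/

open Complex ComplexConjugate

theorem two_lt_add_inv {x : ℝ} (hx : 0 < x) (h1 : x ≠ 1) : 2 < x + x⁻¹ := by
  have hsq : x + x⁻¹ - 2 = (x - 1) ^ 2 / x := by field_simp; ring
  have hpos : 0 < (x - 1) ^ 2 / x := by have := sub_ne_zero.mpr h1; positivity
  linarith

theorem Complex.norm_add_inv_conj (z : ℂ) : ‖z + (conj z)⁻¹‖ = ‖z‖ + ‖z‖⁻¹ := by
  rw [inv_def, conj_conj, normSq_conj, normSq_eq_norm_sq, ← mul_one_add, norm_mul, ← ofReal_one,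
    ← ofReal_add, norm_real, Real.norm_of_nonneg (by positivity)]
  rcases eq_or_ne ‖z‖ 0 with h | h
  · simp [h]
  · field_simp

theorem cubic_mul_roots_eq_of_ne {K : Type*} [Field K] {a b c z w : K} (hzw : z ≠ w)
    (hz : z ^ 3 + a * z ^ 2 + b * z + c = 0) (hw : w ^ 3 + a * w ^ 2 + b * w + c = 0) :
    z * w * (-a - z - w) = -c := by
  have hquad : z ^ 2 + z * w + w ^ 2 + a * (z + w) + b = 0 := by
    apply mul_left_cancel₀ (sub_ne_zero.mpr hzw)
    linear_combination hz - hw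
  linear_combination hz - z * hquad

theorem Cubic.exists_roots_sum_eq_neg {K : Type*} [Field K] [IsAlgClosed K] (a b c : K) :
    ∃ x y z : K, (∀ r ∈ ({x, y, z} : Multiset K), r ^ 3 + a * r ^ 2 + b * r + c = 0) ∧
      x + y + z = -a := by
  have ha : (⟨1, a, b, c⟩ : Cubic K).a ≠ 0 := one_ne_zero
  obtain ⟨x, y, z, h3⟩ := (Cubic.splits_iff_roots_eq_three (φ := RingHom.id K) ha).mp
    (by simpa using IsAlgClosed.splits (Cubic.toPoly ⟨1, a, b, c⟩))
  refine ⟨x, y, z, fun r hr => ?_, ?_⟩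
  · simpa using (Cubic.mem_roots_iff (Cubic.ne_zero_of_a_ne_zero ha) r).mp (h3 ▸ hr)
  · have hb := Cubic.b_eq_three_roots ha h3
    simp only [RingHom.id_apply] at hb
    linear_combination hb

theorem Complex.norm_eq_one_of_cubic_root {a b c z : ℂ} (hc : ‖c‖ = 1) (ha : ‖a‖ ≤ 1)
    (hsr : ∀ z : ℂ, z ≠ 0 → z ^ 3 + a * z ^ 2 + b * z + c = 0 →
      ((conj z)⁻¹) ^ 3 + a * ((conj z)⁻¹) ^ 2 + b * (conj z)⁻¹ + c = 0)
    (hz : z ^ 3 + a * z ^ 2 + b * z + c = 0) : ‖z‖ = 1 := by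
  by_contra hne
  have hz0 : z ≠ 0 := by
    rintro rfl
    simp_all
  set w := (conj z)⁻¹
  have hnorm_w : ‖w‖ = ‖z‖⁻¹ := by simp [w]
  have hzw : z ≠ w := by
    intro h
    have : ‖z‖ * ‖z‖ = 1 := by
      nth_rw 2 [h]
      rw [hnorm_w, mul_inv_cancel₀ (norm_ne_zero_iff.mpr hz0)]
    exact hne (by nlinarith [norm_nonneg z])
  have hnorm_t : ‖-a - z - w‖ = 1 := by
    have hprod := congrArg norm (cubic_mul_roots_eq_of_ne hzw hz (hsr z hz0 hz))
    rwa [norm_mul, norm_mul, hnorm_w, mul_inv_cancel₀ (norm_ne_zero_iff.mpr hz0), one_mul,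
      norm_neg, hc] at hprod
  have hle : ‖z + w‖ ≤ 2 := calc
    ‖z + w‖ = ‖-a - (-a - z - w)‖ := by ring_nf
    _ ≤ ‖-a‖ + ‖-a - z - w‖ := norm_sub_le _ _
    _ ≤ 2 := by rw [norm_neg, hnorm_t]; linarith
  have hlt : 2 < ‖z + w‖ := by
    rw [norm_add_inv_conj]
    exact two_lt_add_inv (norm_pos_iff.mpr hz0) hne
  linarith

theorem Complex.exists_cubic_root_norm_ne_one {a b c : ℂ} (ha : 3 < ‖a‖) :
    ∃ z : ℂ, z ^ 3 + a * z ^ 2 + b * z + c = 0 ∧ ‖z‖ ≠ 1 := by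
  obtain ⟨x, y, z, hroots, hsum⟩ := Cubic.exists_roots_sum_eq_neg a b c
  by_contra! hunit
  have hnorm (r) (hr : r ∈ ({x, y, z} : Multiset ℂ)) : ‖r‖ = 1 := hunit r (hroots r hr)
  have : ‖a‖ ≤ 3 := calc
    ‖a‖ = ‖x + y + z‖ := by rw [hsum, norm_neg]
    _ ≤ ‖x‖ + ‖y‖ + ‖z‖ := norm_add₃_le
    _ = 3 := by rw [hnorm x (by simp), hnorm y (by simp), hnorm z (by simp)]; norm_num
  linarith

/-- For the self-reciprocal cubic `p(z) = z³ + conj(g)z² + gz + f` with `|f| = 1`: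
if `|g| ≤ 1` then all roots of `p` lie on the unit circle, while if `|g| > 3` then `p`
has a root off the unit circle. -/
theorem stmt_14 (f g : ℂ) (hf : ‖f‖ = 1)
    (hsr : ∀ z : ℂ, z ≠ 0 → z ^ 3 + conj g * z ^ 2 + g * z + f = 0 →
      ((conj z)⁻¹) ^ 3 + conj g * ((conj z)⁻¹) ^ 2 + g * (conj z)⁻¹ + f = 0) :
    (‖g‖ ≤ 1 →
        ∀ z : ℂ, z ^ 3 + conj g * z ^ 2 + g * z + f = 0 → ‖z‖ = 1)
    ∧ (3 < ‖g‖ →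
        ∃ z : ℂ, z ^ 3 + conj g * z ^ 2 + g * z + f = 0 ∧ ‖z‖ ≠ 1) :=
  ⟨fun hg _ hz => norm_eq_one_of_cubic_root hf (by rwa [norm_conj]) hsr hz,
    fun hg => exists_cubic_root_norm_ne_one (by rwa [norm_conj])⟩
end
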